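/- With A as in the binomial determinant setting, for every pair 1 ≤ i < j ≤ t and every integer k with 0 ≤ k ≤ b−1, both (x_i − x_j − k)^{b−k} and (x_i − x_j + k)^{b−k} divide det A in ℚ[x_1,…,x_t]. -/

import Mathlib

/-- Generalized binomial coefficient `C(x,k) = x(x-1)⋯(x-k+1)/k!` in a commutative ℚ-algebra. -/
noncomputable def gbinom {R : Type*} [CommRing R] [Algebra ℚ R] (x : R) (k : ℕ) : R :=
  algebraMap ℚ R ((k.factorial : ℚ)⁻¹) * ∏ i ∈ Finset.range k, (x - (i : R))

/-- The `bt × bt` matrix `A`: rows indexed by `p = (p₁,p₂)` encoding `r - 1 = b·p₁ + p₂`,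
columns indexed by `(s, c)` with `1 ≤ s ≤ t`, `0 ≤ c ≤ b-1`, with entry
`C(x_s, a + c + r - 1)`. -/
noncomputable def binomMatrix (a b t : ℕ) :
    Matrix (Fin t × Fin b) (Fin t × Fin b) (MvPolynomial (Fin t) ℚ) :=
  fun p col =>
    gbinom (MvPolynomial.X col.1) (a + (col.2 : ℕ) + (b * (p.1 : ℕ) + (p.2 : ℕ)))

/-- The polynomial (or scalar) `H(x_1,…,x_t)` from the appendix. -/
noncomputable def Hfun {R : Type*} [CommRing R] (a b t : ℕ) (x : Fin t → R) : R :=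
  (∏ i : Fin t,
      ((∏ j ∈ Finset.Icc 1 (b - 1), (x i + (j : R)) ^ (b - j)) *
        (∏ j ∈ Finset.range a, (x i - (j : R)) ^ b) *
        ∏ j ∈ Finset.Icc 1 (b - 1), (x i - (a : R) + 1 - (j : R)) ^ (b - j))) *
    ∏ p ∈ Finset.univ.filter (fun p : Fin t × Fin t => p.1 < p.2),
      ∏ k ∈ Finset.Icc (-(b : ℤ) + 1) ((b : ℤ) - 1),
        (x p.1 - x p.2 + (k : R)) ^ (b - k.natAbs)

/-! Fix `i ≠ j` and `k`. From each column `(i, c)` with `k ≤ c` subtract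
`∑_{m ≤ k} C(k, m) · column (j, c - m)`. By Chu–Vandermonde the new entries are
`C(x_i, n) - C(x_j + k, n)`, hence divisible by `x_i - x_j - k`, and there are `b - k` such
columns. The operation is right multiplication by `1 - E` with `E * E = 0`, so the new
determinant divides `det A`. The `+ k` case is the `- k` case with `i` and `j` swapped. -/

open Finset Matrix Polynomial

section ColumnOperations

variable {n R : Type*} [Fintype n] [CommRing R]

theorem mul_self_eq_zero_of_apply_ne_zero {E : Matrix n n R} {S : Finset n}
    (h : ∀ p q, E p q ≠ 0 → p ∉ S ∧ q ∈ S) : E * E = 0 := by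
  ext p q
  rw [mul_apply, Matrix.zero_apply]
  refine sum_eq_zero fun r _ => by_contra fun hne => ?_
  obtain ⟨hpr, hrq⟩ := ne_zero_and_ne_zero_of_mul hne
  exact (h r q hrq).1 (h p r hpr).2

variable [DecidableEq n]

theorem pow_card_dvd_det_of_dvd_col {f : R} {M : Matrix n n R} {S : Finset n}
    (h : ∀ p, ∀ q ∈ S, f ∣ M p q) : f ^ #S ∣ M.det := by
  rw [det_apply']
  refine dvd_sum fun σ _ => Dvd.dvd.mul_left ?_ _
  calc f ^ #S = ∏ q ∈ S, f := (prod_const f).symm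
    _ ∣ ∏ q ∈ S, M (σ q) q := prod_dvd_prod_of_dvd _ _ fun q hq => h _ q hq
    _ ∣ ∏ q, M (σ q) q := prod_dvd_prod_of_subset _ _ _ (subset_univ S)

theorem det_mul_one_sub_dvd_det (A E : Matrix n n R) (hE : E * E = 0) :
    (A * (1 - E)).det ∣ A.det :=
  ⟨(1 + E).det, by
    rw [← det_mul, mul_assoc, sub_mul, one_mul, mul_add, mul_one, hE]
    simp⟩

theorem pow_card_dvd_det_of_dvd_col_sub_sum {ι : Type*} (A : Matrix n n R) (S : Finset n)
    (s : Finset ι) (g : n → ι → R) (d : n → ι → n)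
    (hd : ∀ q ∈ S, ∀ m ∈ s, d q m ∉ S) (f : R)
    (hf : ∀ p, ∀ q ∈ S, f ∣ A p q - ∑ m ∈ s, g q m * A p (d q m)) :
    f ^ #S ∣ A.det := by
  let E : Matrix n n R := of fun r q =>
    if q ∈ S then ∑ m ∈ s, if d q m = r then g q m else 0 else 0
  have hE : E * E = 0 := by
    refine mul_self_eq_zero_of_apply_ne_zero (S := S) fun r q hrq => ?_
    simp only [E, of_apply] at hrq
    split_ifs at hrq with hq
    · refine ⟨fun hr => hrq (sum_eq_zero fun m hm => if_neg fun h : d q m = r => ?_), hq⟩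
      exact hd q hq m hm (h ▸ hr)
    · exact absurd rfl hrq
  have hAE : ∀ p, ∀ q ∈ S,
      (A * (1 - E)) p q = A p q - ∑ m ∈ s, g q m * A p (d q m) := by
    intro p q hq
    rw [mul_sub, mul_one, Matrix.sub_apply, mul_apply]
    simp only [E, of_apply, if_pos hq, mul_sum, mul_ite, mul_zero]
    rw [sum_comm]
    simp [mul_comm]
  exact (pow_card_dvd_det_of_dvd_col fun p q hq => (hAE p q hq).symm ▸ hf p q hq).trans
    (det_mul_one_sub_dvd_det A E hE)

end ColumnOperations

theorem card_filter_le_val (b k : ℕ) : #{c : Fin b | k ≤ (c : ℕ)} = b - k := by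
  rw [← card_map Fin.valEmbedding, ← Nat.card_Ico]
  congr 1
  ext m
  simp only [mem_map, mem_filter, mem_univ, true_and, Fin.valEmbedding_apply, mem_Ico]
  constructor
  · rintro ⟨c, hc, rfl⟩
    exact ⟨hc, c.2⟩
  · rintro ⟨hkm, hmb⟩
    exact ⟨⟨m, hmb⟩, hkm, rfl⟩

section GeneralizedBinomial

variable {R : Type*} [CommRing R] [Algebra ℚ R]

theorem gbinom_eq_eval (x : R) (k : ℕ) :
    gbinom x k = (C (algebraMap ℚ R (k.factorial : ℚ)⁻¹) * descPochhammer R k).eval x := by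
  rw [gbinom, eval_mul, eval_C, descPochhammer_eval_eq_prod_range]

theorem sub_dvd_gbinom_sub (x y : R) (k : ℕ) : x - y ∣ gbinom x k - gbinom y k := by
  simpa only [gbinom_eq_eval] using sub_dvd_eval_sub x y _

theorem gbinom_eq_choose [BinomialRing R] (x : R) (k : ℕ) : gbinom x k = Ring.choose x k := by
  have h := Ring.descPochhammer_eq_factorial_smul_choose x k
  rw [← aeval_eq_smeval, aeval_def, eval₂_eq_eval_map, descPochhammer_map,
    descPochhammer_eval_eq_prod_range] at h
  rw [gbinom, h, nsmul_eq_mul, ← mul_assoc, ← map_natCast (algebraMap ℚ R), ← map_mul,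
    inv_mul_cancel₀ (by positivity), map_one, one_mul]

theorem sum_range_choose_mul_gbinom [BinomialRing R] (z : R) {k n : ℕ} (hkn : k ≤ n) :
    ∑ m ∈ range (k + 1), (k.choose m : R) * gbinom z (n - m) = gbinom (z + k) n := by
  simp_rw [gbinom_eq_choose, add_comm z, Ring.add_choose_eq n (Commute.all (k : R) z),
    Nat.sum_antidiagonal_eq_sum_range_succ_mk, Ring.choose_natCast]
  refine sum_subset (range_subset_range.mpr (by omega)) fun m _ hmk => ?_
  rw [mem_range, not_lt] at hmk
  rw [Nat.choose_eq_zero_of_lt hmk, Nat.cast_zero, zero_mul]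

end GeneralizedBinomial

theorem sub_sub_natCast_pow_dvd_det_binomMatrix (a b : ℕ) {t : ℕ} {i j : Fin t} (hij : i ≠ j)
    (k : ℕ) :
    (MvPolynomial.X i - MvPolynomial.X j - (k : MvPolynomial (Fin t) ℚ)) ^ (b - k) ∣
      (binomMatrix a b t).det := by
  have hcard : #{q : Fin t × Fin b | q.1 = i ∧ k ≤ (q.2 : ℕ)} = b - k := by
    have hS : ({q : Fin t × Fin b | q.1 = i ∧ k ≤ (q.2 : ℕ)} : Finset (Fin t × Fin b)) =
        ({i} : Finset (Fin t)) ×ˢ ({c : Fin b | k ≤ (c : ℕ)} : Finset (Fin b)) := by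
      ext q
      simp only [mem_filter, mem_univ, true_and, mem_product, mem_singleton]
    rw [hS, card_product, card_singleton, one_mul, card_filter_le_val]
  rw [← hcard]
  refine pow_card_dvd_det_of_dvd_col_sub_sum _ _ (range (k + 1))
    (fun _ m => (k.choose m : MvPolynomial (Fin t) ℚ))
    (fun q m => (j, ⟨q.2 - m, q.2.2.trans_le' (Nat.sub_le _ _)⟩)) ?_ _ ?_
  · intro q hq m _ hmem
    exact hij (mem_filter.mp hmem).2.1.symm
  · intro p q hq
    obtain ⟨rfl, hkq⟩ := (mem_filter.mp hq).2
    set n := a + (q.2 : ℕ) + (b * (p.1 : ℕ) + p.2)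
    have hcol : ∀ m ∈ range (k + 1),
        binomMatrix a b t p (j, ⟨q.2 - m, by omega⟩) = gbinom (MvPolynomial.X j) (n - m) := by
      intro m hm
      rw [mem_range] at hm
      simp only [binomMatrix]
      congr 2
      omega
    rw [sum_congr rfl fun m hm => congrArg _ (hcol m hm),
      sum_range_choose_mul_gbinom _ (by omega : k ≤ n), sub_sub]
    exact sub_dvd_gbinom_sub _ _ n

theorem binom_det_divisibility_differences_general (a b t : ℕ)
    (i j : Fin t) (hij : i < j) (k : ℕ) :
    ((MvPolynomial.X i - MvPolynomial.X j - (k : MvPolynomial (Fin t) ℚ)) ^ (b - k) ∣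
        (binomMatrix a b t).det) ∧
      (MvPolynomial.X i - MvPolynomial.X j + (k : MvPolynomial (Fin t) ℚ)) ^ (b - k) ∣
        (binomMatrix a b t).det := by
  refine ⟨sub_sub_natCast_pow_dvd_det_binomMatrix a b hij.ne k, ?_⟩
  have hneg : MvPolynomial.X i - MvPolynomial.X j + (k : MvPolynomial (Fin t) ℚ) =
      -(MvPolynomial.X j - MvPolynomial.X i - (k : MvPolynomial (Fin t) ℚ)) := by ring
  rw [hneg]
  exact (pow_dvd_pow_of_dvd (neg_dvd.mpr dvd_rfl) _).trans
    (sub_sub_natCast_pow_dvd_det_binomMatrix a b hij.ne' k)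

theorem binom_det_divisibility_differences (a b t : ℕ) (ha : 1 ≤ a) (hb : 1 ≤ b) (ht : 1 ≤ t)
    (i j : Fin t) (hij : i < j) (k : ℕ) (hk : k ≤ b - 1) :
    ((MvPolynomial.X i - MvPolynomial.X j - (k : MvPolynomial (Fin t) ℚ)) ^ (b - k) ∣
        (binomMatrix a b t).det) ∧
      (MvPolynomial.X i - MvPolynomial.X j + (k : MvPolynomial (Fin t) ℚ)) ^ (b - k) ∣
        (binomMatrix a b t).det :=
  binom_det_divisibility_differences_general a b t i j hij k
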